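/- In a Schelling game with |T1| ≥ 5 and |T2| ≥ 5 on an (x × y)-grid with x ≥ 4 and y ≥ 4, no swap-equilibrium is 2-edge-robust; i.e., for every swap-equilibrium v there exists a set S of at most 2 edges such that v is not a swap-equilibrium on G − S. -/

import Mathlib

open SimpleGraph

variable {V : Type*}

/-- Utility of the agent occupying vertex `v` in graph `H` under type assignment `τ`:
the fraction of same-type agents among occupied neighbors (0 if no neighbors). -/
noncomputable def utility (H : SimpleGraph V) (τ : V → Bool) (v : V) : ℚ := by
  classical
  exact if H.neighborSet v = ∅ then 0
    else ((H.neighborSet v ∩ {w | τ w = τ v}).ncard : ℚ) / ((H.neighborSet v).ncard : ℚ)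

/-- The type function after the agents on vertices `i` and `j` exchange their vertices. -/
noncomputable def swapAt (τ : V → Bool) (i j : V) : V → Bool := fun v => by
  classical
  exact if v = i then τ j else if v = j then τ i else τ v

/-- The swap of the (distinct-type) agents on `i` and `j` strictly increases both utilities. -/
def ProfitableSwap (H : SimpleGraph V) (τ : V → Bool) (i j : V) : Prop :=
  τ i ≠ τ j ∧
  utility H τ i < utility H (swapAt τ i j) j ∧
  utility H τ j < utility H (swapAt τ i j) i

/-- Swap-equilibrium: no profitable swap exists. -/
def IsSwapEq (H : SimpleGraph V) (τ : V → Bool) : Prop :=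
  ∀ i j : V, ¬ ProfitableSwap H τ i j

/-- The `(x × y)`-grid graph: vertices `(a, b)` with `a < x`, `b < y`, adjacent iff at
`L1`-distance one. -/
def gridGraph (x y : ℕ) : SimpleGraph (Fin x × Fin y) where
  Adj u v := (u.1 = v.1 ∧ ((u.2 : ℕ) + 1 = (v.2 : ℕ) ∨ (v.2 : ℕ) + 1 = (u.2 : ℕ))) ∨
    (u.2 = v.2 ∧ ((u.1 : ℕ) + 1 = (v.1 : ℕ) ∨ (v.1 : ℕ) + 1 = (u.1 : ℕ)))
  symm := by
    constructor
    intro u v h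
    rcases h with ⟨h1, h2⟩ | ⟨h1, h2⟩
    · exact Or.inl ⟨h1.symm, h2.symm⟩
    · exact Or.inr ⟨h1.symm, h2.symm⟩
  loopless := by constructor; intro u h; rcases h with ⟨_, h⟩ | ⟨_, h⟩ <;> omega

/-! Fix a type `t` and a vertex `p` of type `t` on the highest antidiagonal `a + b` reached by
type `t`, away from the top corner. Its neighbours of type `t` lie on the antidiagonal below, so
deleting at most two edges leaves `p` with neighbours of the other type only, and at least one of
them. If some vertex `q` of the other type, not adjacent to `p`, has a neighbour of type `t`, then
`p` and `q` both profit from swapping: `p` goes from utility `0` to a positive one, `q` from below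
`1` to `1`.

Such a `q` comes from the corner types. If two opposite corners share a type, let `t` be the other
type and take `q` below the lowest vertex of type `t`; when all vertices of type `t` lie on one
antidiagonal, take `q` next to one of them far from `p` instead. Otherwise two opposite sides of the
grid each contain a change of type, and they are too far apart for `p` to neighbour both. -/

section Utility

variable {H : SimpleGraph V} {τ : V → Bool} {v : V}

lemma utility_eq_div (h : ∃ w, H.Adj v w) : utility H τ v =
    ((H.neighborSet v ∩ {w | τ w = τ v}).ncard : ℚ) / ((H.neighborSet v).ncard : ℚ) := by
  obtain ⟨w, hw⟩ := h
  unfold utility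
  exact if_neg (Set.nonempty_iff_ne_empty.mp ⟨w, hw⟩)

lemma utility_eq_zero (h : ∀ w, H.Adj v w → τ w ≠ τ v) : utility H τ v = 0 := by
  have hempty : H.neighborSet v ∩ {w | τ w = τ v} = ∅ :=
    Set.eq_empty_of_forall_notMem fun w ⟨hw, hwv⟩ => h w hw hwv
  unfold utility
  split_ifs <;> simp [hempty]

variable [Finite V]

lemma utility_eq_one (hne : ∃ w, H.Adj v w) (h : ∀ w, H.Adj v w → τ w = τ v) :
    utility H τ v = 1 := by
  obtain ⟨w, hw⟩ := hne
  have hpos : 0 < (H.neighborSet v).ncard := (Set.ncard_pos (Set.toFinite _)).mpr ⟨w, hw⟩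
  rw [utility_eq_div ⟨w, hw⟩,
    Set.inter_eq_left.mpr (show H.neighborSet v ⊆ {w | τ w = τ v} from fun w hw => h w hw)]
  exact div_self (by positivity)

lemma utility_pos (h : ∃ w, H.Adj v w ∧ τ w = τ v) : 0 < utility H τ v := by
  obtain ⟨w, hw, hwv⟩ := h
  rw [utility_eq_div ⟨w, hw⟩]
  have hnum : 0 < (H.neighborSet v ∩ {w | τ w = τ v}).ncard :=
    (Set.ncard_pos (Set.toFinite _)).mpr ⟨w, hw, hwv⟩
  have hden : 0 < (H.neighborSet v).ncard := (Set.ncard_pos (Set.toFinite _)).mpr ⟨w, hw⟩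
  positivity

lemma utility_lt_one (h : ∃ w, H.Adj v w ∧ τ w ≠ τ v) : utility H τ v < 1 := by
  obtain ⟨w, hw, hwv⟩ := h
  have hden : 0 < (H.neighborSet v).ncard := (Set.ncard_pos (Set.toFinite _)).mpr ⟨w, hw⟩
  have hlt : (H.neighborSet v ∩ {w | τ w = τ v}).ncard < (H.neighborSet v).ncard :=
    Set.ncard_lt_ncard (Set.inter_ssubset_left_iff.mpr fun hsub => hwv (hsub hw))
  rw [utility_eq_div ⟨w, hw⟩, div_lt_one (by positivity)]
  exact_mod_cast hlt

end Utility

section Swap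

variable {τ : V → Bool} {i j v : V}

@[simp] lemma swapAt_left : swapAt τ i j i = τ j := by simp [swapAt]

lemma swapAt_right (h : j ≠ i) : swapAt τ i j j = τ i := by simp [swapAt, h]

lemma swapAt_of_ne (hi : v ≠ i) (hj : v ≠ j) : swapAt τ i j v = τ v := by simp [swapAt, hi, hj]

/-- An agent with only other-type neighbours gains from moving next to one of its own type,
and its partner gains from moving into a neighbourhood consisting of its own type only. -/
lemma profitableSwap_of_forall_adj_ne [Finite V] {H : SimpleGraph V} {p q r : V}
    (hp : ∃ w, H.Adj p w) (hpτ : ∀ w, H.Adj p w → τ w ≠ τ p) (hq : τ q ≠ τ p)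
    (hpq : ¬ H.Adj p q) (hqr : H.Adj q r) (hr : τ r = τ p) : ProfitableSwap H τ p q := by
  have hqp : q ≠ p := fun h => hq (congrArg τ h)
  have hrp : r ≠ p := by rintro rfl; exact hpq hqr.symm
  refine ⟨hq.symm, ?_, ?_⟩
  · rw [utility_eq_zero hpτ]
    refine utility_pos ⟨r, hqr, ?_⟩
    rw [swapAt_of_ne hrp hqr.ne', swapAt_right hqp, hr]
  · rw [utility_eq_one hp fun w hw => ?_]
    · exact utility_lt_one ⟨r, hqr, hr ▸ hq.symm⟩
    · have hwq : w ≠ q := by rintro rfl; exact hpq hw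
      rw [swapAt_of_ne hw.ne' hwq, swapAt_left]
      exact (Bool.eq_not_of_ne (hpτ w hw)).trans (Bool.eq_not_of_ne hq).symm

end Swap

section Isolation

variable {W : Type*} {G : SimpleGraph V} {τ : V → Bool} {p q r : V}

lemma deleteEdges_image_adj {A : Set V} {u v : V} :
    (G.deleteEdges ((fun w => s(p, w)) '' A)).Adj u v ↔
      G.Adj u v ∧ ¬ (u = p ∧ v ∈ A) ∧ ¬ (v = p ∧ u ∈ A) := by
  simp only [deleteEdges_adj, Set.mem_image, Sym2.eq_iff, not_exists, not_and]
  constructor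
  · rintro ⟨h, hA⟩
    exact ⟨h, fun hu hv => hA v hv (Or.inl ⟨hu.symm, rfl⟩),
      fun hv hu => hA u hu (Or.inr ⟨hv.symm, rfl⟩)⟩
  · rintro ⟨h, hu, hv⟩
    refine ⟨h, fun w hw => ?_⟩
    rintro (⟨rfl, rfl⟩ | ⟨rfl, rfl⟩)
    exacts [hu rfl hw, hv rfl hw]

/-- Deleting the (at most two) edges from `p` to its own type and swapping `p` with `q` is
profitable. -/
structure IsolatingSwap (G : SimpleGraph V) (τ : V → Bool) (p q r : V) : Prop where
  ncard_same_le : {w | G.Adj p w ∧ τ w = τ p}.ncard ≤ 2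
  exists_adj_ne : ∃ w, G.Adj p w ∧ τ w ≠ τ p
  type_ne : τ q ≠ τ p
  type_eq : τ r = τ p
  adj : G.Adj q r
  not_adj : ¬ G.Adj p q

theorem IsolatingSwap.exists_not_isSwapEq [Finite V] (h : IsolatingSwap G τ p q r) :
    ∃ S : Set (Sym2 V), S ⊆ G.edgeSet ∧ S.ncard ≤ 2 ∧ ¬ IsSwapEq (G.deleteEdges S) τ := by
  set A := {w | G.Adj p w ∧ τ w = τ p}
  have hqp : q ≠ p := fun hqp => h.type_ne (congrArg τ hqp)
  have hadj_p : ∀ w, (G.deleteEdges ((fun w => s(p, w)) '' A)).Adj p w ↔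
      G.Adj p w ∧ τ w ≠ τ p := fun w => by
    simp only [deleteEdges_image_adj, A, Set.mem_ofPred_eq, true_and]
    exact ⟨fun ⟨hw, hA, _⟩ => ⟨hw, fun he => hA ⟨hw, he⟩⟩,
      fun ⟨hw, hne⟩ => ⟨hw, fun hA => hne hA.2, fun ⟨hwp, _⟩ => hw.ne hwp.symm⟩⟩
  refine ⟨(fun w => s(p, w)) '' A, ?_, (Set.ncard_image_le (Set.toFinite A)).trans h.ncard_same_le,
    fun hS => hS p q ?_⟩
  · rintro _ ⟨w, hw, rfl⟩
    exact hw.1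
  obtain ⟨w, hw, hwp⟩ := h.exists_adj_ne
  refine profitableSwap_of_forall_adj_ne ⟨w, (hadj_p w).mpr ⟨hw, hwp⟩⟩
    (fun w hw => ((hadj_p w).mp hw).2) h.type_ne
    (fun hpq => h.not_adj ((hadj_p q).mp hpq).1)
    (deleteEdges_image_adj.mpr ⟨h.adj, fun hq => hqp hq.1,
      fun hr => h.not_adj (hr.1 ▸ h.adj.symm)⟩) h.type_eq

theorem IsolatingSwap.map {G' : SimpleGraph W} (φ : G ≃g G') {τ : W → Bool}
    (h : IsolatingSwap G (τ ∘ φ) p q r) : IsolatingSwap G' τ (φ p) (φ q) (φ r) where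
  ncard_same_le := by
    have hset : {w | G'.Adj (φ p) w ∧ τ w = τ (φ p)} =
        φ '' {w | G.Adj p w ∧ (τ ∘ φ) w = (τ ∘ φ) p} := by
      ext w
      obtain ⟨v, rfl⟩ := φ.surjective w
      simp [φ.injective.mem_set_image, Iso.map_adj_iff]
    rw [hset, Set.ncard_image_of_injective _ φ.injective]
    exact h.ncard_same_le
  exists_adj_ne := by
    obtain ⟨w, hw, hwp⟩ := h.exists_adj_ne
    exact ⟨φ w, φ.map_adj_iff.mpr hw, hwp⟩
  type_ne := h.type_ne
  type_eq := h.type_eq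
  adj := φ.map_adj_iff.mpr h.adj
  not_adj := fun hpq => h.not_adj (φ.map_adj_iff.mp hpq)

lemma ncard_setOf_comp_iso {G' : SimpleGraph W} (φ : G ≃g G') (τ : W → Bool) (t : Bool) :
    {v | (τ ∘ φ) v = t}.ncard = {w | τ w = t}.ncard :=
  Set.ncard_preimage_of_injective_subset_range (s := {w | τ w = t}) φ.injective
    (by simp [φ.surjective.range_eq])

end Isolation

namespace gridGraph

section Symmetry

variable {x y : ℕ}

lemma adj_iff {u v : Fin x × Fin y} : (gridGraph x y).Adj u v ↔
    ((u.1 : ℕ) = v.1 ∧ ((u.2 : ℕ) + 1 = v.2 ∨ (v.2 : ℕ) + 1 = u.2)) ∨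
    ((u.2 : ℕ) = v.2 ∧ ((u.1 : ℕ) + 1 = v.1 ∨ (v.1 : ℕ) + 1 = u.1)) := by
  simp only [gridGraph, Fin.ext_iff]

def reflect : gridGraph x y ≃g gridGraph x y where
  toEquiv := (Equiv.refl _).prodCongr Fin.revPerm
  map_rel_iff' {u v} := by
    have := u.2.isLt
    have := v.2.isLt
    simp only [Equiv.prodCongr_apply, Equiv.coe_refl, Prod.map, id, Fin.revPerm_apply, adj_iff,
      Fin.val_rev]
    omega

def transpose : gridGraph x y ≃g gridGraph y x where
  toEquiv := Equiv.prodComm _ _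
  map_rel_iff' := by
    simp only [Equiv.prodComm_apply, Prod.fst_swap, Prod.snd_swap, adj_iff]
    tauto

@[simp] lemma reflect_apply (v : Fin x × Fin y) : reflect v = (v.1, v.2.rev) := rfl

end Symmetry

section Level

variable {x y : ℕ}

def level (v : Fin x × Fin y) : ℕ := v.1 + v.2

lemma level_of_adj {u v : Fin x × Fin y} (h : (gridGraph x y).Adj u v) :
    level u + 1 = level v ∨ level v + 1 = level u := by
  rw [adj_iff] at h
  unfold level
  omega

lemma ncard_adj_level_le_le_two (p : Fin x × Fin y) :
    {w | (gridGraph x y).Adj p w ∧ level w ≤ level p}.ncard ≤ 2 := by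
  have hinj : Set.InjOn (fun w : Fin x × Fin y => decide ((w.1 : ℕ) = p.1))
      {w | (gridGraph x y).Adj p w ∧ level w ≤ level p} := by
    rintro u ⟨hu, hul⟩ v ⟨hv, hvl⟩ huv
    simp only [decide_eq_decide] at huv
    rw [adj_iff] at hu hv
    unfold level at hul hvl
    ext <;> omega
  simpa using Set.ncard_le_ncard_of_injOn _ (fun _ _ => Set.mem_univ _) hinj

lemma ncard_level_eq_le (L a k : ℕ) :
    {v : Fin x × Fin y | level v = L ∧ a ≤ v.1 ∧ (v.1 : ℕ) ≤ a + k}.ncard ≤ k + 1 := by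
  have hinj : Set.InjOn (fun v : Fin x × Fin y => (v.1 : ℕ))
      {v | level v = L ∧ a ≤ v.1 ∧ (v.1 : ℕ) ≤ a + k} := by
    rintro u ⟨hu, -⟩ v ⟨hv, -⟩ huv
    unfold level at hu hv
    ext <;> simp only at huv <;> omega
  have := Set.ncard_le_ncard_of_injOn _ (fun v hv => Finset.mem_coe.mpr
    (Finset.mem_Icc.mpr hv.2)) hinj (Finset.finite_toSet (Finset.Icc a (a + k)))
  simp only [Set.ncard_coe_finset, Nat.card_Icc] at this
  omega

end Level

variable {m n : ℕ} {τ : Fin (m + 1) × Fin (n + 1) → Bool} {t : Bool}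

lemma exists_adj_level_succ {v : Fin (m + 1) × Fin (n + 1)}
    (hv : v ≠ (Fin.last m, Fin.last n)) :
    ∃ w, (gridGraph _ _).Adj v w ∧ level w = level v + 1 := by
  by_cases h : (v.1 : ℕ) < m
  · exact ⟨(⟨v.1 + 1, by omega⟩, v.2), by simp [adj_iff], by simp [level]; omega⟩
  · have : (v.2 : ℕ) < n := by
      by_contra
      exact hv (Prod.ext (Fin.ext (by simp; omega)) (Fin.ext (by simp; omega)))
    exact ⟨(v.1, ⟨v.2 + 1, by omega⟩), by simp [adj_iff], by simp [level]; omega⟩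

lemma exists_adj_level_pred {v : Fin (m + 1) × Fin (n + 1)} (hv : v ≠ (0, 0)) :
    ∃ w, (gridGraph _ _).Adj v w ∧ level w + 1 = level v := by
  by_cases h : 0 < (v.1 : ℕ)
  · exact ⟨(⟨v.1 - 1, by omega⟩, v.2), by simp [adj_iff]; omega, by simp [level]; omega⟩
  · have : 0 < (v.2 : ℕ) := by
      by_contra
      exact hv (Prod.ext (Fin.ext (by simp only [Fin.val_zero]; omega))
        (Fin.ext (by simp only [Fin.val_zero]; omega)))
    exact ⟨(v.1, ⟨v.2 - 1, by omega⟩), by simp [adj_iff]; omega, by simp [level]; omega⟩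

lemma isolatingSwap_of_level_max {p q r : Fin (m + 1) × Fin (n + 1)} (hp : τ p = t)
    (hmax : ∀ v, τ v = t → level v ≤ level p) (htop : τ (Fin.last m, Fin.last n) ≠ t)
    (hq : τ q ≠ t) (hr : τ r = t) (hqr : (gridGraph _ _).Adj q r)
    (hpq : ¬ (gridGraph _ _).Adj p q) : IsolatingSwap (gridGraph _ _) τ p q r := by
  subst hp
  have hsame : {w | (gridGraph _ _).Adj p w ∧ τ w = τ p} ⊆
      {w | (gridGraph _ _).Adj p w ∧ level w ≤ level p} := fun w hw => ⟨hw.1, hmax w hw.2⟩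
  refine ⟨(Set.ncard_le_ncard hsame).trans (ncard_adj_level_le_le_two p), ?_, hq, hr, hqr, hpq⟩
  obtain ⟨w, hpw, hw⟩ := exists_adj_level_succ (fun h => htop (h ▸ rfl))
  exact ⟨w, hpw, fun hwt => by have := hmax w hwt; omega⟩

lemma exists_isolatingSwap_of_diag_ne (h0 : τ (0, 0) ≠ t) (htop : τ (Fin.last m, Fin.last n) ≠ t)
    (hcard : 4 ≤ {v | τ v = t}.ncard) :
    ∃ p q r, IsolatingSwap (gridGraph (m + 1) (n + 1)) τ p q r := by
  have hT : {v | τ v = t}.Nonempty := Set.nonempty_of_ncard_ne_zero (by omega)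
  obtain ⟨p, hp, hpmax⟩ := Set.exists_max_image _ level (Set.toFinite _) hT
  obtain ⟨z, hz, hzmin⟩ := Set.exists_min_image _ level (Set.toFinite _) hT
  rcases (hzmin p hp).lt_or_eq with hlt | heq
  · obtain ⟨q, hzq, hq⟩ := exists_adj_level_pred (fun h => h0 (h ▸ hz))
    refine ⟨p, q, z, isolatingSwap_of_level_max hp hpmax htop (fun hqt => ?_) hz hzq.symm
      fun hpq => ?_⟩
    · have := hzmin q hqt
      omega
    · have := level_of_adj hpq
      omega
  -- All vertices of type `t` lie on one level, so at most three of them are near `p`.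
  obtain ⟨r, hr, hfar⟩ : ∃ r, τ r = t ∧ ((r.1 : ℕ) + 2 ≤ p.1 ∨ (p.1 : ℕ) + 2 ≤ r.1) := by
    by_contra! hnear
    have hsub : {v | τ v = t} ⊆
        {v | level v = level p ∧ (p.1 : ℕ) - 1 ≤ v.1 ∧ (v.1 : ℕ) ≤ (p.1 : ℕ) - 1 + 2} :=
      fun v hv => by
        have := hpmax v hv
        have := hzmin v hv
        have := hnear v hv
        refine ⟨by omega, by omega, by omega⟩
    have := (Set.ncard_le_ncard hsub (Set.toFinite _)).trans (ncard_level_eq_le _ _ 2)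
    omega
  have hrl : level r = level p := by
    have := hpmax r hr
    have := hzmin r hr
    omega
  obtain ⟨q, hrq, hq⟩ := exists_adj_level_succ (fun h => htop (h ▸ hr))
  refine ⟨p, q, r, isolatingSwap_of_level_max hp hpmax htop (fun hqt => ?_) hr hrq.symm
    fun hpq => ?_⟩
  · have := hpmax q hqt
    omega
  · unfold level at hrl
    rw [adj_iff] at hpq hrq
    omega

lemma exists_adj_in_row (b : Fin (n + 1)) (h0 : τ (0, b) = t) (hlast : τ (Fin.last m, b) ≠ t) :
    ∃ q r, (gridGraph _ _).Adj q r ∧ τ q ≠ t ∧ τ r = t ∧ q.2 = b := by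
  obtain ⟨a, ha, hmax⟩ := Set.exists_max_image {a : Fin (m + 1) | τ (a, b) = t}
    (fun a => (a : ℕ)) (Set.toFinite _) ⟨0, h0⟩
  have ham : (a : ℕ) < m := lt_of_le_of_ne (Nat.lt_succ_iff.mp a.isLt)
    fun h => hlast (by rwa [show a = Fin.last m from Fin.ext h] at ha)
  refine ⟨(⟨a + 1, by omega⟩, b), (a, b), by simp [adj_iff], fun h => ?_, ha, rfl⟩
  have := hmax _ h
  simp at this

/-- When the left corners share a type and the right corners carry the other one, the bottom and
top rows both contain a change of type; these are too far apart for `p` to neighbour both. -/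
lemma exists_isolatingSwap_of_sides (hn : 3 ≤ n) (hleft : τ (0, 0) = τ (0, Fin.last n))
    (hright : τ (Fin.last m, 0) = τ (Fin.last m, Fin.last n))
    (hne : τ (0, 0) ≠ τ (Fin.last m, 0)) :
    ∃ p q r, IsolatingSwap (gridGraph (m + 1) (n + 1)) τ p q r := by
  obtain ⟨p, hp, hpmax⟩ := Set.exists_max_image {v | τ v = τ (0, 0)} level (Set.toFinite _)
    ⟨(0, 0), rfl⟩
  have htop : τ (Fin.last m, Fin.last n) ≠ τ (0, 0) := hright ▸ hne.symm
  obtain ⟨q₀, r₀, hqr₀, hq₀, hr₀, hrow₀⟩ := exists_adj_in_row 0 rfl hne.symm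
  obtain ⟨q₁, r₁, hqr₁, hq₁, hr₁, hrow₁⟩ := exists_adj_in_row (Fin.last n) hleft.symm htop
  by_cases hpq₀ : (gridGraph _ _).Adj p q₀
  · refine ⟨p, q₁, r₁, isolatingSwap_of_level_max hp hpmax htop hq₁ hr₁ hqr₁ fun hpq₁ => ?_⟩
    rw [adj_iff] at hpq₀ hpq₁
    rw [hrow₀] at hpq₀
    rw [hrow₁] at hpq₁
    simp only [Fin.val_zero, Fin.val_last] at hpq₀ hpq₁
    omega
  · exact ⟨p, q₀, r₀, isolatingSwap_of_level_max hp hpmax htop hq₀ hr₀ hqr₀ hpq₀⟩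

lemma exists_isolatingSwap (hm : 3 ≤ m) (hn : 3 ≤ n) (τ : Fin (m + 1) × Fin (n + 1) → Bool)
    (hcard : ∀ t, 4 ≤ {v | τ v = t}.ncard) :
    ∃ p q r, IsolatingSwap (gridGraph (m + 1) (n + 1)) τ p q r := by
  have hBool : ∀ {a b c : Bool}, a ≠ b → b ≠ c → a = c := by decide
  by_cases hd : τ (0, 0) = τ (Fin.last m, Fin.last n)
  · exact exists_isolatingSwap_of_diag_ne (Bool.not_ne_self _).symm (hd ▸ (Bool.not_ne_self _).symm)
      (hcard _)
  by_cases ha : τ (0, Fin.last n) = τ (Fin.last m, 0)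
  · obtain ⟨p, q, r, h⟩ := exists_isolatingSwap_of_diag_ne (τ := τ ∘ reflect)
      (t := !τ (0, Fin.last n)) (by simp) (by simp [ha])
      ((ncard_setOf_comp_iso _ _ _).symm ▸ hcard _)
    exact ⟨_, _, _, h.map reflect⟩
  by_cases hs : τ (0, 0) = τ (0, Fin.last n)
  · exact exists_isolatingSwap_of_sides hn hs (hBool (Ne.symm ha) (hs ▸ hd)) (hs ▸ ha)
  · obtain ⟨p, q, r, h⟩ := exists_isolatingSwap_of_sides (τ := τ ∘ transpose) hm
      (hBool hs ha) (hBool (Ne.symm hs) hd) hs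
    exact ⟨_, _, _, h.map transpose⟩

end gridGraph

theorem grid_not_two_edge_robust_general (x y : ℕ) (hx : 4 ≤ x) (hy : 4 ≤ y)
    (τ : Fin x × Fin y → Bool)
    (h1 : 5 ≤ {v : Fin x × Fin y | τ v = true}.ncard)
    (h2 : 5 ≤ {v : Fin x × Fin y | τ v = false}.ncard) :
    ∃ S : Set (Sym2 (Fin x × Fin y)), S ⊆ (gridGraph x y).edgeSet ∧ S.ncard ≤ 2 ∧
      ¬ IsSwapEq ((gridGraph x y).deleteEdges S) τ := by
  obtain ⟨m, rfl⟩ : ∃ m, x = m + 1 := ⟨x - 1, by omega⟩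
  obtain ⟨n, rfl⟩ : ∃ n, y = n + 1 := ⟨y - 1, by omega⟩
  have hcard : ∀ t, 4 ≤ {v | τ v = t}.ncard := by
    rintro (_ | _) <;> omega
  obtain ⟨p, q, r, h⟩ := gridGraph.exists_isolatingSwap (by omega) (by omega) τ hcard
  exact h.exists_not_isSwapEq

/-- On an `(x × y)`-grid with `x, y ≥ 4` and at least five agents of each type, no
swap-equilibrium is 2-edge-robust: some set of at most two edges makes it unstable. -/
theorem grid_not_two_edge_robust (x y : ℕ) (hx : 4 ≤ x) (hy : 4 ≤ y)
    (τ : Fin x × Fin y → Bool)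
    (h1 : 5 ≤ {v : Fin x × Fin y | τ v = true}.ncard)
    (h2 : 5 ≤ {v : Fin x × Fin y | τ v = false}.ncard)
    (heq : IsSwapEq (gridGraph x y) τ) :
    ∃ S : Set (Sym2 (Fin x × Fin y)), S ⊆ (gridGraph x y).edgeSet ∧ S.ncard ≤ 2 ∧
      ¬ IsSwapEq ((gridGraph x y).deleteEdges S) τ :=
  grid_not_two_edge_robust_general x y hx hy τ h1 h2
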